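/- The convex conjugate (Legendre–Fenchel transform) of the map τ ↦ ln(e^{aτ} + e^{bτ}) on ℝ, for a < b, evaluated at x ∈ (a,b), equals ((x−a)/D) ln((x−a)/D) + ((b−x)/D) ln((b−x)/D) with D = b−a; i.e., sup_{τ∈ℝ} [xτ − ln(e^{aτ}+e^{bτ})] = ψ(x) for x ∈ (a,b). -/

import Mathlib

/-! Write `x = p b + q a` with `p = (x − a)/D`, `q = (b − x)/D`. Concavity of `log`, applied to
`e^u / p` and `e^v / q` with weights `p`, `q`, gives the Gibbs inequality
`p u + q v − log(e^u + e^v) ≤ p log p + q log q`, with equality when `e^u / p = e^v / q`;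
for `u = bτ`, `v = aτ` this happens at `τ = (log p − log q)/D`. -/

open Real

namespace Real

theorem mul_add_mul_sub_log_exp_add_exp_le {p q : ℝ} (hp : 0 < p) (hq : 0 < q)
    (hpq : p + q = 1) (u v : ℝ) :
    p * u + q * v - log (exp u + exp v) ≤ p * log p + q * log q := by
  have hconc := strictConcaveOn_log_Ioi.concaveOn.2 (div_pos (exp_pos u) hp)
    (div_pos (exp_pos v) hq) hp.le hq.le hpq
  simp only [smul_eq_mul, mul_div_cancel₀ _ hp.ne', mul_div_cancel₀ _ hq.ne',
    log_div (exp_ne_zero _) hp.ne', log_div (exp_ne_zero _) hq.ne', log_exp] at hconc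
  linarith

theorem mul_add_mul_sub_log_exp_add_exp_eq {p q : ℝ} (hp : 0 < p) (hq : 0 < q)
    (hpq : p + q = 1) (t : ℝ) :
    p * (log p + t) + q * (log q + t) - log (exp (log p + t) + exp (log q + t))
      = p * log p + q * log q := by
  rw [exp_add, exp_add, exp_log hp, exp_log hq, ← add_mul, hpq, one_mul, log_exp]
  linear_combination t * hpq

end Real

theorem stmt_8_general (a b : ℝ) (x : ℝ) (hx : x ∈ Set.Ioo a b) :
    sSup (Set.range fun τ : ℝ =>
        x * τ - Real.log (Real.exp (a * τ) + Real.exp (b * τ)))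
      = ((x - a) / (b - a)) * Real.log ((x - a) / (b - a))
        + ((b - x) / (b - a)) * Real.log ((b - x) / (b - a)) := by
  obtain ⟨hax, hxb⟩ := hx
  have hD : 0 < b - a := by linarith
  set p := (x - a) / (b - a)
  set q := (b - x) / (b - a)
  have hp : 0 < p := div_pos (by linarith) hD
  have hq : 0 < q := div_pos (by linarith) hD
  have hpq : p + q = 1 := by simp only [p, q]; field_simp; ring
  have hx_mix : x = p * b + q * a := by simp only [p, q]; field_simp; ring
  have hsplit (τ : ℝ) : x * τ - log (exp (a * τ) + exp (b * τ))
      = p * (b * τ) + q * (a * τ) - log (exp (b * τ) + exp (a * τ)) := by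
    rw [add_comm (exp (a * τ)), hx_mix]
    ring
  set τ₀ := (log p - log q) / (b - a)
  have hτ₀ : (b - a) * τ₀ = log p - log q := mul_div_cancel₀ _ hD.ne'
  obtain ⟨t, hb, ha⟩ : ∃ t, b * τ₀ = log p + t ∧ a * τ₀ = log q + t :=
    ⟨b * τ₀ - log p, by ring, by linarith⟩
  refine IsGreatest.csSup_eq ⟨⟨τ₀, ?_⟩, Set.forall_mem_range.2 fun τ => ?_⟩
  · dsimp only
    rw [hsplit, hb, ha]
    exact mul_add_mul_sub_log_exp_add_exp_eq hp hq hpq t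
  · rw [hsplit]
    exact mul_add_mul_sub_log_exp_add_exp_le hp hq hpq _ _

/-- For `a < b` and `x ∈ (a,b)`, the Legendre–Fenchel transform of
`τ ↦ ln(e^{aτ} + e^{bτ})` at `x` equals the Fermi–Dirac entropy:
`sup_τ [xτ − ln(e^{aτ}+e^{bτ})] = ((x−a)/D) ln((x−a)/D) + ((b−x)/D) ln((b−x)/D)`,
`D = b − a`. -/
theorem stmt_8 (a b : ℝ) (hab : a < b) (x : ℝ) (hx : x ∈ Set.Ioo a b) :
    sSup (Set.range fun τ : ℝ =>
        x * τ - Real.log (Real.exp (a * τ) + Real.exp (b * τ)))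
      = ((x - a) / (b - a)) * Real.log ((x - a) / (b - a))
        + ((b - x) / (b - a)) * Real.log ((b - x) / (b - a)) :=
  stmt_8_general a b x hx
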